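/- arXiv:1111.5105 — 5 statements merged into one kernel-verified Lean document; each statement's English description precedes it below -/
import Mathlib

section
/- Let a, b ∈ ℂ be nonproportional (i.e., not real multiples of each other, with Im(a·conj(b)) ≠ 0). Then there exists α ∈ ℂ such that max over λ on the line segment [a,b] of |1 - αλ| is strictly less than 1. -/
/-!
The real-linear functional `z ↦ Re (c z)` can be chosen to equal `1` at both endpoints
because `a` and `b` are `ℝ`-linearly independent, and then it equals `1` on the whole segment.
For `w` with `Re w = 1` and `t > 0` small, `‖1 - t w‖² = 1 - 2t + t²‖w‖² < 1`; the segment is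
bounded, so one `t` works for all its points and `α = t c`.
-/

open Bornology Metric ComplexConjugate

namespace Complex

/-- Cramer's rule: `Im (a b̄)` is the determinant of the system `Re (c a) = Re (c b) = 1`. -/
lemma exists_re_mul_eq_one_of_im_mul_conj_ne_zero {a b : ℂ} (h : (a * conj b).im ≠ 0) :
    ∃ c : ℂ, (c * a).re = 1 ∧ (c * b).re = 1 := by
  set D := (a * conj b).im
  have hD : D = a.im * b.re - a.re * b.im := by simp [D, mul_im]; ring
  refine ⟨I * conj (a - b) / D, ?_, ?_⟩ <;>
  · simp only [mul_re, mul_im, div_ofReal_re, div_ofReal_im, conj_re, conj_im, I_re, I_im,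
      sub_re, sub_im]
    field_simp
    rw [hD]
    ring

lemma re_mul_eq_one_of_mem_segment {a b c l : ℂ} (ha : (c * a).re = 1) (hb : (c * b).re = 1)
    (hl : l ∈ segment ℝ a b) : (c * l).re = 1 := by
  have hlin : IsLinearMap ℝ fun z : ℂ ↦ (c * z).re :=
    ⟨fun x y ↦ by simp [mul_add], fun r x ↦ by simp [mul_left_comm c]⟩
  exact (convex_hyperplane hlin 1).segment_subset ha hb hl

lemma norm_one_sub_ofReal_mul_lt_one {w : ℂ} {t : ℝ} (ht : 0 < t)
    (hwt : t * ‖w‖ ^ 2 < 2 * w.re) :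
    ‖1 - t * w‖ < 1 := by
  have hsq : ‖1 - t * w‖ ^ 2 = 1 - 2 * t * w.re + t ^ 2 * ‖w‖ ^ 2 := by
    rw [Complex.sq_norm, Complex.sq_norm, normSq_sub, normSq_one, normSq_mul, normSq_ofReal]
    simp only [one_mul, map_mul, conj_ofReal, re_ofReal_mul, conj_re]
    ring
  have : ‖1 - t * w‖ ^ 2 < 1 := by rw [hsq]; nlinarith
  nlinarith [norm_nonneg (1 - t * w)]

lemma exists_forall_norm_one_sub_mul_lt_one {K : Set ℂ} (hK : IsBounded K) {c : ℂ}
    (hc : ∀ z ∈ K, (c * z).re = 1) : ∃ α : ℂ, ∀ z ∈ K, ‖1 - α * z‖ < 1 := by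
  obtain ⟨R, hR⟩ := isBounded_iff_forall_norm_le.mp hK
  set t : ℝ := 1 / ((‖c‖ * R) ^ 2 + 1)
  have ht : 0 < t := by positivity
  refine ⟨t * c, fun z hz ↦ ?_⟩
  have hcz : ‖c * z‖ ^ 2 ≤ (‖c‖ * R) ^ 2 := by
    rw [norm_mul]
    gcongr
    exact hR z hz
  have htR : t * (‖c‖ * R) ^ 2 < 1 := by
    rw [div_mul_eq_mul_div, one_mul, div_lt_one (by positivity)]
    linarith
  rw [mul_assoc]
  apply norm_one_sub_ofReal_mul_lt_one ht
  rw [hc z hz]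
  nlinarith

end Complex

lemma isBounded_segment {E : Type*} [SeminormedAddCommGroup E] [NormedSpace ℝ E] (a b : E) :
    IsBounded (segment ℝ a b) :=
  isBounded_closedBall.subset <| (convex_closedBall 0 (max ‖a‖ ‖b‖)).segment_subset
    (by simp) (by simp)

theorem stmt1 (a b : ℂ) (h : (a * (starRingEnd ℂ) b).im ≠ 0) :
    ∃ α : ℂ, ∀ l ∈ segment ℝ a b, ‖1 - α * l‖ < 1 := by
  obtain ⟨c, ha, hb⟩ := Complex.exists_re_mul_eq_one_of_im_mul_conj_ne_zero h
  exact Complex.exists_forall_norm_one_sub_mul_lt_one (isBounded_segment a b)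
    fun l hl ↦ Complex.re_mul_eq_one_of_mem_segment ha hb hl
end

section
/- With the same setup (A Hermitian positive semidefinite, z with arg z = φ ∈ (-π,π), A_z = zI + A, |‖v‖|² = |z|‖v‖² + (Av,v)), for every v: |(A_z v, v)| ≥ cos(φ/2)·|‖v‖|². -/
/-!
Rotating by `β = exp (-i arg z / 2)` turns `z` into `|z| exp (i arg z / 2)`, whose real part is
`|z| cos (arg z / 2)`, while the real number `(Av, v)` is only scaled by `Re β = cos (arg z / 2)`.
Hence `Re (β (A_z v, v)) = cos (arg z / 2) (|z| ‖v‖² + (Av, v))`, and `|β| = 1` bounds this by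
`|(A_z v, v)|`.
-/

open Complex in
theorem Complex.exp_neg_half_arg_mul_I_mul_self (z : ℂ) :
    exp (↑(-(arg z / 2)) * I) * z = ‖z‖ * exp ((arg z / 2 : ℝ) * I) := by
  conv_lhs => arg 2; rw [← norm_mul_exp_arg_mul_I z]
  rw [mul_left_comm, ← exp_add]
  congr 2
  push_cast
  ring

open Complex in
theorem Complex.cos_half_arg_mul_le_norm (z : ℂ) (r a : ℝ) :
    Real.cos (arg z / 2) * (‖z‖ * r + a) ≤ ‖z * r + a‖ := by
  set β := exp (↑(-(arg z / 2)) * I)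
  have hβ : ‖β‖ = 1 := norm_exp_ofReal_mul_I _
  have hβre : β.re = Real.cos (arg z / 2) := by
    rw [exp_ofReal_mul_I_re, Real.cos_neg]
  have hβz : β * z = ‖z‖ * exp ((arg z / 2 : ℝ) * I) := exp_neg_half_arg_mul_I_mul_self z
  calc Real.cos (arg z / 2) * (‖z‖ * r + a)
      = (β * (z * r + a)).re := by
        rw [mul_add β, ← mul_assoc, hβz]
        simp only [add_re, re_mul_ofReal, re_ofReal_mul, exp_ofReal_mul_I_re, hβre]
        ring
    _ ≤ ‖β * (z * r + a)‖ := re_le_norm _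
    _ = ‖z * r + a‖ := by rw [norm_mul, hβ, one_mul]

theorem LinearMap.IsSymmetric.inner_smul_add_apply_self {V : Type*} [NormedAddCommGroup V]
    [InnerProductSpace ℂ V] {A : V →ₗ[ℂ] V} (hA : A.IsSymmetric) (z : ℂ) (v : V) :
    inner ℂ v (z • v + A v) = z * (‖v‖ ^ 2 : ℝ) + (inner ℂ v (A v)).re := by
  rw [inner_add_right, inner_smul_right, inner_self_eq_norm_sq_to_K]
  push_cast
  exact congrArg _ (hA.coe_re_inner_self_apply v).symm

theorem stmt12_general {V : Type*} [NormedAddCommGroup V] [InnerProductSpace ℂ V]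
    (A : V →ₗ[ℂ] V) (hA : A.IsSymmetric)
    (hpsd : ∀ v : V, 0 ≤ ((inner ℂ v (A v) : ℂ)).re)
    (z : ℂ)
    (tb : V → ℝ)
    (htb : tb = fun v : V =>
      Real.sqrt (‖z‖ * ‖v‖ ^ 2 + ((inner ℂ v (A v) : ℂ)).re)) :
    ∀ v : V, Real.cos (z.arg / 2) * tb v ^ 2 ≤
      ‖(inner ℂ v (z • v + A v) : ℂ)‖ := by
  intro v
  rw [htb, Real.sq_sqrt (by positivity [hpsd v]), hA.inner_smul_add_apply_self]
  exact Complex.cos_half_arg_mul_le_norm z _ _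

theorem stmt12 {V : Type*} [NormedAddCommGroup V] [InnerProductSpace ℂ V]
    [FiniteDimensional ℂ V]
    (A : V →ₗ[ℂ] V) (hA : A.IsSymmetric)
    (hpsd : ∀ v : V, 0 ≤ ((inner ℂ v (A v) : ℂ)).re)
    (z : ℂ) (hz : z.arg ∈ Set.Ioo (-Real.pi) Real.pi) (hz0 : z ≠ 0)
    (tb : V → ℝ)
    (htb : tb = fun v : V =>
      Real.sqrt (‖z‖ * ‖v‖ ^ 2 + ((inner ℂ v (A v) : ℂ)).re)) :
    ∀ v : V, Real.cos (z.arg / 2) * tb v ^ 2 ≤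
      ‖(inner ℂ v (z • v + A v) : ℂ)‖ :=
  stmt12_general A hA hpsd z tb htb
end

section
/- Polynomial error bound for CG with complex shift: Under the setup of the previous statement with W = V_n the Krylov space span{r₀, A r₀, …, A^{n-1} r₀}, r₀ = g - A_z w₀, for any polynomial Q of degree ≤ n with Q(0) = 1, the error e_n = w_n - w satisfies |‖e_n‖| ≤ sec(φ/2) · max over λ ∈ σ(A) of |Q(z + λ)| · |‖e₀‖|. -/
open Polynomial
open scoped InnerProductSpace

/-!
The error `eₙ = wₙ - w` is orthogonal to `Vₙ` for the form `a(u, v) = ⟪u, (z + A) v⟫`. In an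
orthonormal eigenbasis of `A` this form has weights `z + λ`, while `|‖v‖|²` has weights
`|z| + λ ≥ |z + λ|`, so `|a(u, v)| ≤ |‖u‖| |‖v‖|`; rotating `a(v, v) = z ‖v‖² + (A v, v)` by
`e^{-i φ/2}` shows `|a(v, v)| ≥ cos (φ/2) |‖v‖|²`. Céa's argument then gives
`cos (φ/2) |‖eₙ‖| ≤ |‖q‖|` for every `q ∈ eₙ + Vₙ`. Since `Q(0) = 1` and `(z + A) e₀ = -r₀`,
`q = Q(z + A) e₀` is such a vector, and it multiplies the eigen-coordinates of `e₀` by `Q(z + λ)`.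
-/

theorem Complex.cos_arg_div_two_mul_le_norm (z : ℂ) (s t : ℝ) :
    Real.cos (z.arg / 2) * (‖z‖ * t + s) ≤ ‖z * t + s‖ := by
  set θ := z.arg / 2
  set u := Complex.exp ((-θ : ℝ) * Complex.I)
  have hexp : u * Complex.exp (z.arg * Complex.I) = Complex.exp (θ * Complex.I) := by
    rw [← Complex.exp_add]
    push_cast [θ]
    ring_nf
  have hrot : u * (z * t + s) = (‖z‖ * t : ℝ) * Complex.exp (θ * Complex.I) + s * u := by
    push_cast
    linear_combination (-(u * t)) * Complex.norm_mul_exp_arg_mul_I z + (‖z‖ * t) * hexp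
  calc Real.cos θ * (‖z‖ * t + s) = (u * (z * t + s)).re := by
        rw [hrot, Complex.add_re, Complex.re_ofReal_mul, mul_comm, Complex.re_ofReal_mul,
          Complex.exp_ofReal_mul_I_re, Complex.exp_ofReal_mul_I_re, Real.cos_neg]
        ring
    _ ≤ ‖u * (z * t + s)‖ := Complex.re_le_norm _
    _ = ‖z * t + s‖ := by rw [norm_mul, Complex.norm_exp_ofReal_mul_I, one_mul]

section Krylov

variable {R M : Type*} [CommRing R] [AddCommGroup M] [Module R M]

def krylovSubspace (A : Module.End R M) (r : M) (n : ℕ) : Submodule R M :=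
  Submodule.span R {x | ∃ k < n, x = (A ^ k) r}

variable {A : Module.End R M} {r : M} {n : ℕ}

theorem aeval_apply_mem_krylovSubspace {P : R[X]} (hP : P.degree < n) :
    aeval A P r ∈ krylovSubspace A r n := by
  rcases eq_or_ne P 0 with rfl | hP0
  · simp
  rw [aeval_eq_sum_range' ((natDegree_lt_iff_degree_lt hP0).2 hP), LinearMap.sum_apply]
  exact Submodule.sum_mem _ fun k hk =>
    Submodule.smul_mem _ _ (Submodule.subset_span ⟨k, Finset.mem_range.1 hk, rfl⟩)

theorem aeval_algebraMap_add_apply_mem_krylovSubspace [IsDomain R] (c : R) {P : R[X]}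
    (hP : P.degree < n) : aeval (algebraMap R _ c + A) P r ∈ krylovSubspace A r n := by
  have hshift : algebraMap R _ c + A = aeval A (X + C c) := by simp [add_comm]
  rw [hshift, ← aeval_comp]
  apply aeval_apply_mem_krylovSubspace
  rwa [degree_comp (by simp), degree_X_add_C, mul_one]

theorem aeval_algebraMap_add_apply_sub_mem_krylovSubspace [IsDomain R] (c : R) {Q : R[X]}
    (hdeg : Q.natDegree ≤ n) (hQ0 : Q.eval 0 = 1) {e : M}
    (he : (algebraMap R _ c + A) e = -r) :
    aeval (algebraMap R _ c + A) Q e - e ∈ krylovSubspace A r n := by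
  have hQ : Q = Q.divX * X + 1 := by
    simpa [coeff_zero_eq_eval_zero, hQ0] using (divX_mul_X_add Q).symm
  have hQne : Q ≠ 0 := fun h => by simp [h] at hQ0
  have hsub : aeval (algebraMap R _ c + A) Q e - e = -aeval (algebraMap R _ c + A) Q.divX r := by
    conv_lhs => rw [hQ]
    simp [he]
  rw [hsub]
  exact neg_mem (aeval_algebraMap_add_apply_mem_krylovSubspace c
    ((degree_divX_lt hQne).trans_le (degree_le_of_natDegree_le hdeg)))

end Krylov

section ShiftedEnergy

variable {V : Type*} [NormedAddCommGroup V] [InnerProductSpace ℂ V]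

/-- The norm `|‖v‖|` of the paper. -/
noncomputable def shiftedEnergyNorm (z : ℂ) (A : V →ₗ[ℂ] V) (v : V) : ℝ :=
  √(‖z‖ * ‖v‖ ^ 2 + (⟪v, A v⟫_ℂ).re)

namespace OrthonormalBasis

variable {ι : Type*} [Fintype ι] (b : OrthonormalBasis ι ℂ V)

theorem inner_apply_of_apply_eq_smul {T : V →ₗ[ℂ] V} {d : ι → ℂ}
    (hT : ∀ i, T (b i) = d i • b i) (i : ι) (v : V) : ⟪b i, T v⟫_ℂ = d i * ⟪b i, v⟫_ℂ := by
  conv_lhs => rw [← b.sum_repr' v]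
  simp only [map_sum, map_smul, hT, smul_smul, b.orthonormal.inner_right_fintype]
  ring

theorem inner_apply_eq_sum_of_apply_eq_smul {T : V →ₗ[ℂ] V} {d : ι → ℂ}
    (hT : ∀ i, T (b i) = d i • b i) (u v : V) :
    ⟪u, T v⟫_ℂ = ∑ i, d i * (⟪u, b i⟫_ℂ * ⟪b i, v⟫_ℂ) := by
  rw [← b.sum_inner_mul_inner]
  refine Finset.sum_congr rfl fun i _ => ?_
  rw [b.inner_apply_of_apply_eq_smul hT]
  ring

theorem norm_sq_add_re_inner_eq_sum {A : V →ₗ[ℂ] V} {μ : ι → ℝ}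
    (hA : ∀ i, A (b i) = (μ i : ℂ) • b i) (z : ℂ) (v : V) :
    ‖z‖ * ‖v‖ ^ 2 + (⟪v, A v⟫_ℂ).re = ∑ i, (‖z‖ + μ i) * ‖⟪b i, v⟫_ℂ‖ ^ 2 := by
  have hsq : ∀ i, ⟪v, b i⟫_ℂ * ⟪b i, v⟫_ℂ = (‖⟪b i, v⟫_ℂ‖ ^ 2 : ℝ) := fun i => by
    rw [← inner_conj_symm, Complex.conj_mul']
    norm_cast
  rw [← b.sum_sq_norm_inner_right, b.inner_apply_eq_sum_of_apply_eq_smul hA, Finset.mul_sum,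
    Complex.re_sum, ← Finset.sum_add_distrib]
  refine Finset.sum_congr rfl fun i _ => ?_
  rw [hsq, ← Complex.ofReal_mul, Complex.ofReal_re]
  ring

theorem shiftedEnergyNorm_eq_sqrt_sum {A : V →ₗ[ℂ] V} {μ : ι → ℝ}
    (hA : ∀ i, A (b i) = (μ i : ℂ) • b i) (z : ℂ) (v : V) :
    shiftedEnergyNorm z A v = √(∑ i, (‖z‖ + μ i) * ‖⟪b i, v⟫_ℂ‖ ^ 2) := by
  rw [shiftedEnergyNorm, b.norm_sq_add_re_inner_eq_sum hA]

variable {A : V →ₗ[ℂ] V} {μ : ι → ℝ} (hA : ∀ i, A (b i) = (μ i : ℂ) • b i) (hμ : ∀ i, 0 ≤ μ i)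
  (z : ℂ)
include hA hμ

theorem norm_inner_smul_add_le_shiftedEnergyNorm_mul (u v : V) :
    ‖⟪u, z • v + A v⟫_ℂ‖ ≤ shiftedEnergyNorm z A u * shiftedEnergyNorm z A v := by
  have hB : ∀ i, (algebraMap ℂ (Module.End ℂ V) z + A) (b i) = (z + μ i) • b i := fun i => by
    simp [hA, add_smul]
  have hw : ∀ i, 0 ≤ ‖z‖ + μ i := fun i => add_nonneg (norm_nonneg z) (hμ i)
  rw [b.shiftedEnergyNorm_eq_sqrt_sum hA, b.shiftedEnergyNorm_eq_sqrt_sum hA,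
    ← Real.sqrt_mul (Finset.sum_nonneg fun i _ => mul_nonneg (hw i) (sq_nonneg _))]
  apply Real.le_sqrt_of_sq_le
  calc ‖⟪u, z • v + A v⟫_ℂ‖ ^ 2
      = ‖∑ i, (z + μ i) * (⟪u, b i⟫_ℂ * ⟪b i, v⟫_ℂ)‖ ^ 2 := by
        rw [← b.inner_apply_eq_sum_of_apply_eq_smul hB]
        simp
    _ ≤ (∑ i, (‖z‖ + μ i) * (‖⟪b i, u⟫_ℂ‖ * ‖⟪b i, v⟫_ℂ‖)) ^ 2 := by
        gcongr
        refine (norm_sum_le _ _).trans (Finset.sum_le_sum fun i _ => ?_)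
        rw [norm_mul, norm_mul, norm_inner_symm u]
        gcongr
        exact (norm_add_le _ _).trans_eq (by rw [Complex.norm_real, Real.norm_of_nonneg (hμ i)])
    _ ≤ (∑ i, (‖z‖ + μ i) * ‖⟪b i, u⟫_ℂ‖ ^ 2) * ∑ i, (‖z‖ + μ i) * ‖⟪b i, v⟫_ℂ‖ ^ 2 :=
        Finset.sum_sq_le_sum_mul_sum_of_sq_le_mul _
          (fun i _ => mul_nonneg (hw i) (sq_nonneg _)) (fun i _ => mul_nonneg (hw i) (sq_nonneg _))
          fun i _ => le_of_eq (by ring)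

theorem shiftedEnergyNorm_aeval_le {Q : ℂ[X]} {C : ℝ} (hC : ∀ i, ‖Q.eval (z + μ i)‖ ≤ C)
    (x : V) :
    shiftedEnergyNorm z A (aeval (algebraMap ℂ _ z + A) Q x) ≤ C * shiftedEnergyNorm z A x := by
  have hQb : ∀ i, aeval (algebraMap ℂ _ z + A) Q (b i) = Q.eval (z + μ i) • b i := fun i =>
    Module.End.aeval_apply_of_hasEigenvector
      ⟨Module.End.mem_eigenspace_iff.2 (by simp [hA, add_smul]), b.orthonormal.ne_zero i⟩
  rw [b.shiftedEnergyNorm_eq_sqrt_sum hA, b.shiftedEnergyNorm_eq_sqrt_sum hA]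
  rcases isEmpty_or_nonempty ι with _ | ⟨⟨i₀⟩⟩
  · simp
  have hC0 : 0 ≤ C := (norm_nonneg _).trans (hC i₀)
  rw [← Real.sqrt_sq hC0, ← Real.sqrt_mul (sq_nonneg C), Finset.mul_sum]
  refine Real.sqrt_le_sqrt (Finset.sum_le_sum fun i _ => ?_)
  rw [b.inner_apply_of_apply_eq_smul hQb, norm_mul, mul_pow, mul_left_comm]
  have := hμ i
  gcongr
  exact hC i

end OrthonormalBasis

theorem LinearMap.IsPositive.cos_arg_div_two_mul_sq_shiftedEnergyNorm_le {A : V →ₗ[ℂ] V}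
    (hA : A.IsPositive) (z : ℂ) (v : V) :
    Real.cos (z.arg / 2) * shiftedEnergyNorm z A v ^ 2 ≤ ‖⟪v, z • v + A v⟫_ℂ‖ := by
  rw [shiftedEnergyNorm, Real.sq_sqrt (by have := hA.re_inner_nonneg_right v; positivity),
    inner_add_right, inner_smul_right, inner_self_eq_norm_sq_to_K,
    ← hA.isSymmetric.coe_re_inner_self_apply v]
  exact_mod_cast Complex.cos_arg_div_two_mul_le_norm z _ _

end ShiftedEnergy

theorem galerkin_quasiOptimal {𝕜 E : Type*} [RCLike 𝕜] [NormedAddCommGroup E]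
    [InnerProductSpace 𝕜 E] {B : E →ₗ[𝕜] E} {N : E → ℝ} {c : ℝ} {W : Submodule 𝕜 E} {e q : E}
    (hN : ∀ v, 0 ≤ N v) (hcoer : ∀ v, c * N v ^ 2 ≤ ‖⟪v, B v⟫_𝕜‖)
    (hbdd : ∀ u v, ‖⟪u, B v⟫_𝕜‖ ≤ N u * N v) (horth : ∀ φ ∈ W, ⟪φ, B e⟫_𝕜 = 0)
    (hq : q - e ∈ W) : c * N e ≤ N q := by
  have hqe : ⟪e, B e⟫_𝕜 = ⟪q, B e⟫_𝕜 := by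
    have := horth _ hq
    rw [inner_sub_left, sub_eq_zero] at this
    exact this.symm
  rcases (hN e).eq_or_lt with he | he
  · rw [← he, mul_zero]
    exact hN q
  refine le_of_mul_le_mul_right ?_ he
  calc c * N e * N e = c * N e ^ 2 := by ring
    _ ≤ ‖⟪q, B e⟫_𝕜‖ := hqe ▸ hcoer e
    _ ≤ N q * N e := hbdd q e

theorem stmt14_general {V : Type*} [NormedAddCommGroup V] [InnerProductSpace ℂ V]
    [FiniteDimensional ℂ V]
    (A : V →ₗ[ℂ] V) (hA : A.IsSymmetric)
    (hpos : ∀ v : V, v ≠ 0 → 0 < ((inner ℂ v (A v) : ℂ)).re)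
    (z : ℂ) (hz : z.arg ∈ Set.Ioo (-Real.pi) Real.pi)
    (g w w0 wn : V) (n : ℕ)
    (hw : z • w + A w = g)
    (r0 : V) (hr0 : r0 = g - (z • w0 + A w0))
    (Vn : Submodule ℂ V)
    (hVn : Vn = Submodule.span ℂ {x : V | ∃ k < n, x = (A ^ k) r0})
    (hwn : wn - w0 ∈ Vn)
    (hgal : ∀ φ ∈ Vn, (inner ℂ φ (z • wn + A wn) : ℂ) = (inner ℂ φ g : ℂ))
    (Q : Polynomial ℂ) (hdeg : Q.natDegree ≤ n) (hQ0 : Q.eval 0 = 1)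
    (C : ℝ)
    (hC : ∀ μ : ℂ, Module.End.HasEigenvalue A μ →
      ‖Q.eval (z + μ)‖ ≤ C)
    (tb : V → ℝ)
    (htb : tb = fun v : V =>
      Real.sqrt (‖z‖ * ‖v‖ ^ 2 + ((inner ℂ v (A v) : ℂ)).re)) :
    tb (wn - w) ≤ (1 / Real.cos (z.arg / 2)) * C * tb (w0 - w) := by
  subst htb hVn
  set B := algebraMap ℂ (Module.End ℂ V) z + A
  have hBapp : ∀ v, B v = z • v + A v := fun v => by simp [B]
  have hApos : A.IsPositive :=
    ⟨hA, fun v => by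
      rcases eq_or_ne v 0 with rfl | hv
      · simp
      · rw [hA v v]
        exact (hpos v hv).le⟩
  have hres : aeval B Q (w0 - w) - (wn - w) ∈ krylovSubspace A r0 n := by
    have hBe : B (w0 - w) = -r0 := by rw [hr0, map_sub, hBapp, hBapp, hw]; abel
    convert sub_mem (aeval_algebraMap_add_apply_sub_mem_krylovSubspace z hdeg hQ0 hBe) hwn using 1
    abel
  have horth : ∀ φ ∈ krylovSubspace A r0 n, ⟪φ, B (wn - w)⟫_ℂ = 0 := fun φ hφ => by
    rw [map_sub, hBapp, hBapp, hw, inner_sub_right, hgal φ hφ, sub_self]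
  set b := hA.eigenvectorBasis rfl
  have hAb : ∀ i, A (b i) = (hA.eigenvalues rfl i : ℂ) • b i := hA.apply_eigenvectorBasis rfl
  have hμ := hApos.nonneg_eigenvalues rfl
  have hcea : Real.cos (z.arg / 2) * shiftedEnergyNorm z A (wn - w)
      ≤ shiftedEnergyNorm z A (aeval B Q (w0 - w)) :=
    galerkin_quasiOptimal (fun _ => Real.sqrt_nonneg _)
      (fun v => hBapp v ▸ hApos.cos_arg_div_two_mul_sq_shiftedEnergyNorm_le z v)
      (fun u v => hBapp v ▸ b.norm_inner_smul_add_le_shiftedEnergyNorm_mul hAb hμ z u v)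
      horth hres
  have hcos : 0 < Real.cos (z.arg / 2) :=
    Real.cos_pos_of_mem_Ioo ⟨by linarith [hz.1], by linarith [hz.2]⟩
  have hpoly := b.shiftedEnergyNorm_aeval_le hAb hμ z
    (fun i => hC _ (hA.hasEigenvalue_eigenvalues rfl i)) (w0 - w)
  change shiftedEnergyNorm z A (wn - w) ≤ _ * shiftedEnergyNorm z A (w0 - w)
  rw [mul_assoc, one_div_mul_eq_div, le_div_iff₀ hcos, mul_comm]
  exact hcea.trans hpoly

theorem stmt14 {V : Type*} [NormedAddCommGroup V] [InnerProductSpace ℂ V]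
    [FiniteDimensional ℂ V]
    (A : V →ₗ[ℂ] V) (hA : A.IsSymmetric)
    (hpos : ∀ v : V, v ≠ 0 → 0 < ((inner ℂ v (A v) : ℂ)).re)
    (z : ℂ) (hz : z.arg ∈ Set.Ioo (-Real.pi) Real.pi) (hz0 : z ≠ 0)
    (g w w0 wn : V) (n : ℕ)
    (hw : z • w + A w = g)
    (r0 : V) (hr0 : r0 = g - (z • w0 + A w0))
    (Vn : Submodule ℂ V)
    (hVn : Vn = Submodule.span ℂ {x : V | ∃ k < n, x = (A ^ k) r0})
    (hwn : wn - w0 ∈ Vn)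
    (hgal : ∀ φ ∈ Vn, (inner ℂ φ (z • wn + A wn) : ℂ) = (inner ℂ φ g : ℂ))
    (Q : Polynomial ℂ) (hdeg : Q.natDegree ≤ n) (hQ0 : Q.eval 0 = 1)
    (C : ℝ)
    (hC : ∀ μ : ℂ, Module.End.HasEigenvalue A μ →
      ‖Q.eval (z + μ)‖ ≤ C)
    (tb : V → ℝ)
    (htb : tb = fun v : V =>
      Real.sqrt (‖z‖ * ‖v‖ ^ 2 + ((inner ℂ v (A v) : ℂ)).re)) :
    tb (wn - w) ≤ (1 / Real.cos (z.arg / 2)) * C * tb (w0 - w) :=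
  stmt14_general A hA hpos z hz g w w0 wn n hw r0 hr0 Vn hVn hwn hgal Q hdeg hQ0 C hC tb htb
end

section
/- Let 0 < λ₁ < λ_N and z ∈ ℂ with arg z ∈ (-π,π), and define η_z = -(√(λ_N+z) - √(λ₁+z))/(√(λ_N+z) + √(λ₁+z)), where square roots have argument in (-π/2, π/2). Then |η_z| < 1, and T_n(s_z) = (η_zⁿ + η_z⁻ⁿ)/2 where s_z = -(λ₁+λ_N+2z)/(λ_N-λ₁). -/
/-!
Both square roots lie in the right half-plane, and since `(√w)² = w` gives
`Im w = 2 Re √w · Im √w`, the imaginary parts of `√(λ_N + z)` and `√(λ₁ + z)` have the sign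
of `Im z`. Hence `Re (√(λ_N + z) · conj √(λ₁ + z)) > 0`, which is equivalent to `|η_z| < 1`.
Algebraically `η_z + η_z⁻¹ = 2 s_z`, and the Chebyshev identity follows from the Dickson (Vieta–Lucas)
identity `C_n(x + x⁻¹) = xⁿ + x⁻ⁿ` together with `C_n(2s) = 2 T_n(s)`.
-/

open Complex Polynomial

theorem Polynomial.Chebyshev.two_mul_T_eval_of_two_mul_eq_add {R : Type*} [CommRing R]
    {x y s : R} (hxy : x * y = 1) (hs : 2 * s = x + y) (n : ℕ) :
    2 * (Chebyshev.T R n).eval s = x ^ n + y ^ n := by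
  have hC : (Chebyshev.C R n).eval (2 * s) = 2 * (Chebyshev.T R n).eval s := by
    simpa using congrArg (eval s) (Chebyshev.C_comp_two_mul_X R n)
  rw [← hC, hs, ← dickson_one_one_eq_chebyshev_C, dickson_one_one_eval_add_inv x y hxy]

theorem neg_sub_div_add_add_inv {K : Type*} [Field K] {a b : K} (h : a ^ 2 ≠ b ^ 2) :
    -(a - b) / (a + b) + (-(a - b) / (a + b))⁻¹ = -2 * (a ^ 2 + b ^ 2) / (a ^ 2 - b ^ 2) := by
  have hsub : a - b ≠ 0 := fun h' ↦ h (by rw [sub_eq_zero.1 h'])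
  have hadd : a + b ≠ 0 := fun h' ↦ h (by rw [eq_neg_of_add_eq_zero_left h', neg_sq])
  rw [show a ^ 2 - b ^ 2 = (a + b) * (a - b) by ring]
  field_simp
  ring

namespace Complex

theorem ofReal_add_mem_slitPlane {l : ℝ} (hl : 0 < l) {z : ℂ} (hz : z.arg ≠ Real.pi) :
    (l : ℂ) + z ∈ slitPlane := by
  rw [mem_slitPlane_iff, add_re, add_im, ofReal_re, ofReal_im, zero_add]
  by_cases him : z.im = 0
  · have : ¬ z.re < 0 := fun hre ↦ hz (arg_eq_pi_iff.2 ⟨hre, him⟩)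
    exact Or.inl (by linarith)
  · exact Or.inr him

theorem re_cpow_inv_two_pos {w : ℂ} (hw : w ∈ slitPlane) : 0 < (w ^ (2⁻¹ : ℂ)).re := by
  rw [cpow_inv_two_re, Real.sqrt_pos]
  rcases mem_slitPlane_iff.1 hw with hre | him
  · linarith [norm_nonneg w]
  · linarith [neg_abs_le w.re, abs_re_lt_norm.2 him]

theorem im_mul_im_nonneg_of_im_sq_eq {a b : ℂ} (ha : 0 < a.re) (hb : 0 < b.re)
    (hab : (a ^ 2).im = (b ^ 2).im) : 0 ≤ a.im * b.im := by
  simp only [sq, mul_im] at hab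
  have key : a.im * b.im * (a.re * b.re) = (a.re * a.im) ^ 2 := by
    linear_combination (a.re * a.im / 2) * hab.symm
  exact nonneg_of_mul_nonneg_left (key ▸ sq_nonneg _) (mul_pos ha hb)

theorem norm_sub_lt_norm_add_of_im_sq_eq {a b : ℂ} (ha : 0 < a.re) (hb : 0 < b.re)
    (hab : (a ^ 2).im = (b ^ 2).im) : ‖a - b‖ < ‖a + b‖ := by
  have him := im_mul_im_nonneg_of_im_sq_eq ha hb hab
  have hsq : ‖a - b‖ ^ 2 < ‖a + b‖ ^ 2 := by
    rw [Complex.sq_norm, Complex.sq_norm, normSq_sub, normSq_add]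
    simp only [mul_re, conj_re, conj_im]
    nlinarith [mul_pos ha hb]
  exact lt_of_pow_lt_pow_left₀ 2 (norm_nonneg _) hsq

end Complex

theorem stmt16_general (l1 lN : ℝ) (h1 : 0 < l1) (h1N : l1 < lN)
    (z : ℂ) (hz : z.arg ∈ Set.Ioo (-Real.pi) Real.pi)
    (n : ℕ)
    (sz : ℂ) (hsz : sz = -((l1 : ℂ) + (lN : ℂ) + 2 * z) / ((lN : ℂ) - (l1 : ℂ)))
    (sq1 sqN : ℂ) (hsq1 : sq1 = ((l1 : ℂ) + z) ^ ((1 : ℂ) / 2))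
    (hsqN : sqN = ((lN : ℂ) + z) ^ ((1 : ℂ) / 2))
    (η : ℂ) (hη : η = -(sqN - sq1) / (sqN + sq1)) :
    ‖η‖ < 1 ∧
    (Polynomial.Chebyshev.T ℂ (n : ℤ)).eval sz =
      (η ^ (n : ℤ) + η ^ (-(n : ℤ))) / 2 := by
  rw [one_div] at hsq1 hsqN
  have hw1 := ofReal_add_mem_slitPlane h1 hz.2.ne
  have hwN := ofReal_add_mem_slitPlane (h1.trans h1N) hz.2.ne
  have hre1 : 0 < sq1.re := hsq1 ▸ re_cpow_inv_two_pos hw1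
  have hreN : 0 < sqN.re := hsqN ▸ re_cpow_inv_two_pos hwN
  have hsq1_sq : sq1 ^ 2 = l1 + z := by rw [hsq1, cpow_ofNat_inv_pow]
  have hsqN_sq : sqN ^ 2 = lN + z := by rw [hsqN, cpow_ofNat_inv_pow]
  have hdiff : (lN : ℂ) - l1 ≠ 0 := sub_ne_zero.2 (ofReal_injective.ne h1N.ne')
  have hsq_ne : sqN ^ 2 ≠ sq1 ^ 2 := by
    rw [hsqN_sq, hsq1_sq]; simpa [sub_eq_zero] using hdiff
  have hadd : sqN + sq1 ≠ 0 :=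
    ne_of_apply_ne re (by rw [add_re, zero_re]; exact (add_pos hreN hre1).ne')
  refine ⟨?_, ?_⟩
  · rw [hη, neg_div, norm_neg, norm_div, div_lt_one (norm_pos_iff.2 hadd)]
    exact norm_sub_lt_norm_add_of_im_sq_eq hreN hre1 (by simp [hsqN_sq, hsq1_sq])
  · have hη0 : η ≠ 0 := by
      rw [hη]
      exact div_ne_zero (neg_ne_zero.2 (sub_ne_zero.2 fun h ↦ hsq_ne (h ▸ rfl))) hadd
    have hs : 2 * sz = η + η⁻¹ := by
      rw [hη, neg_sub_div_add_add_inv hsq_ne, hsqN_sq, hsq1_sq, hsz,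
        add_sub_add_right_eq_sub]
      ring
    have hT := Chebyshev.two_mul_T_eval_of_two_mul_eq_add (mul_inv_cancel₀ hη0) hs n
    rw [zpow_neg, zpow_natCast, ← inv_pow, ← hT]
    ring

theorem stmt16 (l1 lN : ℝ) (h1 : 0 < l1) (h1N : l1 < lN)
    (z : ℂ) (hz : z.arg ∈ Set.Ioo (-Real.pi) Real.pi) (hz0 : z ≠ 0)
    (n : ℕ)
    (sz : ℂ) (hsz : sz = -((l1 : ℂ) + (lN : ℂ) + 2 * z) / ((lN : ℂ) - (l1 : ℂ)))
    (sq1 sqN : ℂ) (hsq1 : sq1 = ((l1 : ℂ) + z) ^ ((1 : ℂ) / 2))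
    (hsqN : sqN = ((lN : ℂ) + z) ^ ((1 : ℂ) / 2))
    (η : ℂ) (hη : η = -(sqN - sq1) / (sqN + sq1)) :
    ‖η‖ < 1 ∧
    (Polynomial.Chebyshev.T ℂ (n : ℤ)).eval sz =
      (η ^ (n : ℤ) + η ^ (-(n : ℤ))) / 2 :=
  stmt16_general l1 lN h1 h1N z hz n sz hsz sq1 sqN hsq1 hsqN η hη
end

section
/- Three-term collapse for shifted CG: in the setting above, let p₀ = r₀ and p_{n+1} = r_{n+1} + Σ_{k=0}^{n} β_{nk} p_k with β_{nk} = -(A_z r_{n+1}, p_k)/(A_z p_k, p_k). Then for n ≥ 1 and 0 ≤ k ≤ n-1 one has β_{nk} = 0; in particular p_{n+1} = r_{n+1} + β_n p_n with β_n = -(A_z r_{n+1}, p_n)/(A_z p_n, p_n), and (A_z p_n, p_k) = 0 for all 0 ≤ k ≤ n-1. The key identity is (A_z r_{n+1}, φ) = (r_{n+1}, A_z φ) for all φ ∈ V_{n+1}, which follows from (r_{n+1}, φ) = 0 on V_{n+1} since (A_z u, v) - (u, A_z v) = (z - z̄)(u,v). -/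
/-!
Galerkin orthogonality says that `r (m + 1)` is orthogonal to the Krylov space `V_{m+1}`, and
`V_m` is mapped into `V_{m+1}` by `A_z = z + A`. Since `A_z - A_z^* = (z - conj z) I`, the two
products `(A_z r, φ)` and `(r, A_z φ)` agree for `φ ⊥ r`, so `(A_z r (m + 1), p k) = 0`
whenever `p k ∈ V_m`, i.e. for `k < m`. Hence all `β m k` with `k < m` vanish, and the
recurrence becomes the two-term one, from which `A_z`-conjugacy of the directions follows by
induction. The denominators `(A_z p k, p k)` do not vanish: `(A p, p) > 0` and `arg z ≠ π`.
-/

open Submodule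

section Krylov

variable {R M : Type*} [Ring R] [AddCommGroup M] [Module R M]

def krylov (A : M →ₗ[R] M) (v : M) (m : ℕ) : Submodule R M :=
  span R {x : M | ∃ k < m, x = (A ^ k) v}

variable {A : M →ₗ[R] M} {v : M}

theorem krylov_mono : Monotone (krylov A v) := fun _ _ hab =>
  span_mono fun _ ⟨k, hk, hx⟩ => ⟨k, hk.trans_le hab, hx⟩

@[simp]
theorem krylov_zero : krylov A v 0 = ⊥ := by
  simp [krylov]

theorem mem_krylov_one : v ∈ krylov A v 1 :=
  subset_span ⟨0, Nat.one_pos, by simp⟩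

theorem map_mem_krylov_succ {m : ℕ} {x : M} (hx : x ∈ krylov A v m) :
    A x ∈ krylov A v (m + 1) := by
  suffices krylov A v m ≤ (krylov A v (m + 1)).comap A from this hx
  refine span_le.mpr ?_
  rintro _ ⟨k, hk, rfl⟩
  exact subset_span ⟨k + 1, by omega, by rw [pow_succ', Module.End.mul_apply]⟩

theorem shifted_map_mem_krylov_succ {m : ℕ} {x : M} (z : R) (hx : x ∈ krylov A v m) :
    z • x + A x ∈ krylov A v (m + 1) :=
  add_mem (smul_mem _ _ (krylov_mono m.le_succ hx)) (map_mem_krylov_succ hx)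

theorem residual_mem_krylov {z : R} {g : M} {w r : ℕ → M}
    (hr : ∀ m, r m = g - (z • w m + A (w m))) (hw : ∀ m, w m - w 0 ∈ krylov A (r 0) m)
    (m : ℕ) : r m ∈ krylov A (r 0) (m + 1) := by
  have hrm : r m = r 0 - (z • (w m - w 0) + A (w m - w 0)) := by
    rw [hr, hr, smul_sub, map_sub]
    abel
  rw [hrm]
  exact sub_mem (krylov_mono (by omega) mem_krylov_one) (shifted_map_mem_krylov_succ z (hw m))

end Krylov

theorem direction_mem_of_residual_mem {R M : Type*} [Ring R] [AddCommGroup M] [Module R M]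
    {K : ℕ → Submodule R M} (hK : Monotone K) {r p : ℕ → M} {β : ℕ → ℕ → R} {n : ℕ}
    (hr : ∀ m, r m ∈ K (m + 1)) (hp0 : p 0 = r 0)
    (hp : ∀ m < n, p (m + 1) = r (m + 1) + ∑ k ∈ Finset.range (m + 1), β m k • p k) :
    ∀ m ≤ n, p m ∈ K (m + 1) := by
  intro m
  induction m using Nat.strong_induction_on with
  | _ m ih =>
    intro hm
    cases m with
    | zero => exact hp0 ▸ hr 0
    | succ m =>
      rw [hp m hm]
      refine add_mem (hr _) (sum_mem fun k hk => smul_mem _ _ (hK ?_ (ih k ?_ ?_))) <;>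
        simp only [Finset.mem_range] at hk <;> omega

section ConjugateDirections

variable {K V : Type*} [Field K] [AddCommGroup V] [Module K V] (S : V →ₗ[K] V → K)
  {r p : ℕ → V} {β : ℕ → ℕ → K}

theorem succ_eq_of_coeff_eq_zero {m : ℕ}
    (hp : p (m + 1) = r (m + 1) + ∑ k ∈ Finset.range (m + 1), β m k • p k)
    (hβ : ∀ k < m, β m k = 0) : p (m + 1) = r (m + 1) + β m m • p m := by
  rw [hp, Finset.sum_range_succ, Finset.sum_eq_zero fun k hk => ?_, zero_add]
  rw [hβ k (Finset.mem_range.mp hk), zero_smul]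

theorem conjugate_of_two_term_recurrence {n : ℕ}
    (hβ : ∀ m k, β m k = -S (r (m + 1)) (p k) / S (p k) (p k))
    (hp : ∀ m < n, p (m + 1) = r (m + 1) + β m m • p m)
    (hr : ∀ m < n, ∀ k < m, S (r (m + 1)) (p k) = 0)
    (hne : ∀ k < n, S (p k) (p k) ≠ 0) :
    ∀ j ≤ n, ∀ k < j, S (p j) (p k) = 0 := by
  intro j hj k hk
  induction j with
  | zero => omega
  | succ m ih =>
    have hS : S (p (m + 1)) (p k) = S (r (m + 1)) (p k) + β m m * S (p m) (p k) := by
      rw [hp m hj, map_add, map_smul, Pi.add_apply, Pi.smul_apply, smul_eq_mul]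
    rcases (Nat.lt_succ_iff.mp hk).eq_or_lt with rfl | hkm
    · rw [hS, hβ, div_mul_cancel₀ _ (hne k hj), add_neg_cancel]
    · rw [hS, hr m hj k hkm, ih (by omega) hkm, mul_zero, add_zero]

end ConjugateDirections

section Shifted

variable {𝕜 V : Type*} [RCLike 𝕜] [NormedAddCommGroup V] [InnerProductSpace 𝕜 V]
  {A : V →ₗ[𝕜] V}

theorem ne_zero_of_sub_mem_of_mem_orthogonal {K : Submodule 𝕜 V} {x y : V} (hx : x ∈ Kᗮ)
    (hx0 : x ≠ 0) (hxy : y - x ∈ K) : y ≠ 0 := by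
  rintro rfl
  rw [zero_sub, neg_mem_iff] at hxy
  exact hx0 (disjoint_def.mp K.orthogonal_disjoint x hxy hx)

theorem inner_shifted_eq_of_inner_eq_zero (hA : A.IsSymmetric) (z : 𝕜) {φ r : V}
    (h : inner 𝕜 φ r = 0) : inner 𝕜 φ (z • r + A r) = inner 𝕜 (z • φ + A φ) r := by
  rw [inner_add_right, inner_add_left, inner_smul_right, inner_smul_left, h, hA]
  rw [mul_zero, mul_zero]

theorem inner_shifted_eq_zero_of_mem_orthogonal_krylov (hA : A.IsSymmetric) (z : 𝕜)
    {v r φ : V} {m : ℕ} (hr : r ∈ (krylov A v (m + 1))ᗮ) (hφ : φ ∈ krylov A v m) :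
    inner 𝕜 φ (z • r + A r) = 0 := by
  rw [inner_shifted_eq_of_inner_eq_zero hA z (hr φ (krylov_mono m.le_succ hφ))]
  exact hr _ (shifted_map_mem_krylov_succ z hφ)

end Shifted

theorem inner_shifted_self_ne_zero {V : Type*} [NormedAddCommGroup V] [InnerProductSpace ℂ V]
    {A : V →ₗ[ℂ] V} (hA : A.IsSymmetric) (hpos : ∀ v : V, v ≠ 0 → 0 < (inner ℂ v (A v)).re)
    {z : ℂ} (hz : z.arg ≠ Real.pi) {v : V} (hv : v ≠ 0) :
    inner ℂ v (z • v + A v) ≠ 0 := by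
  intro h
  have hA_real : inner ℂ v (A v) = ((inner ℂ v (A v)).re : ℂ) :=
    Complex.ext (by simp) (hA.im_inner_self_apply v)
  have hv_norm : 0 < ‖v‖ := norm_pos_iff.mpr hv
  have hz_eq : z = ((-((inner ℂ v (A v)).re / ‖v‖ ^ 2) : ℝ) : ℂ) := by
    rw [inner_add_right, inner_smul_right, inner_self_eq_norm_sq_to_K, hA_real] at h
    have : (‖v‖ : ℂ) ≠ 0 := by exact_mod_cast hv_norm.ne'
    push_cast
    field_simp
    linear_combination h
  refine hz (hz_eq ▸ Complex.arg_ofReal_of_neg (neg_neg_iff_pos.mpr ?_))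
  have := hpos v hv
  positivity

theorem stmt19_general {V : Type*} [NormedAddCommGroup V] [InnerProductSpace ℂ V]
    (A : V →ₗ[ℂ] V) (hA : A.IsSymmetric)
    (hpos : ∀ v : V, v ≠ 0 → 0 < ((inner ℂ v (A v) : ℂ)).re)
    (z : ℂ) (hz : z.arg ∈ Set.Ioo (-Real.pi) Real.pi)
    (g w0 : V) (w r : ℕ → V)
    (hr : ∀ m, r m = g - (z • w m + A (w m)))
    (Vk : ℕ → Submodule ℂ V)
    (hVk : ∀ m, Vk m = Submodule.span ℂ {x : V | ∃ k < m, x = (A ^ k) (r 0)})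
    (hwm : ∀ m, w m - w0 ∈ Vk m)
    (hgal : ∀ m, ∀ φ ∈ Vk m, (inner ℂ φ (z • w m + A (w m)) : ℂ) = (inner ℂ φ g : ℂ))
    (S : V → V → ℂ) (hS : S = fun u v : V => (inner ℂ v (z • u + A u) : ℂ))
    (n : ℕ)
    (hrne : ∀ m ≤ n + 1, r m ≠ 0)
    (p : ℕ → V) (hp0 : p 0 = r 0)
    (β : ℕ → ℕ → ℂ)
    (hβ : ∀ m k, β m k = -(S (r (m + 1)) (p k)) / (S (p k) (p k)))
    (hprec : ∀ m < n + 1,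
      p (m + 1) = r (m + 1) + ∑ k ∈ Finset.range (m + 1), β m k • p k) :
    (∀ k < n, β n k = 0) ∧
    (p (n + 1) = r (n + 1) + β n n • p n) ∧
    (∀ k < n, S (p n) (p k) = 0) := by
  obtain rfl : Vk = krylov A (r 0) := funext hVk
  have hw0 : w 0 = w0 := sub_eq_zero.mp (by simpa using hwm 0)
  have horth (m : ℕ) : r m ∈ (krylov A (r 0) m)ᗮ := fun φ hφ => by
    rw [hr, inner_sub_right, hgal m φ hφ, sub_self]
  have hres := residual_mem_krylov hr (hw0 ▸ hwm)
  have hdir := direction_mem_of_residual_mem krylov_mono hres hp0 fun m hm => hprec m (by omega)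
  have hSr : ∀ m ≤ n, ∀ k < m, S (r (m + 1)) (p k) = 0 := fun m hm k hk =>
    hS ▸ inner_shifted_eq_zero_of_mem_orthogonal_krylov hA z (horth (m + 1))
      (krylov_mono hk (hdir k (by omega)))
  have hβ0 : ∀ m ≤ n, ∀ k < m, β m k = 0 := fun m hm k hk => by
    rw [hβ, hSr m hm k hk, neg_zero, zero_div]
  have htwo : ∀ m ≤ n, p (m + 1) = r (m + 1) + β m m • p m := fun m hm =>
    succ_eq_of_coeff_eq_zero (hprec m (by omega)) (hβ0 m hm)
  have hpne : ∀ m ≤ n, p m ≠ 0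
    | 0, _ => hp0 ▸ hrne 0 (by omega)
    | m + 1, hm => ne_zero_of_sub_mem_of_mem_orthogonal (horth (m + 1)) (hrne _ (by omega))
        (by rw [htwo m (by omega), add_sub_cancel_left]; exact smul_mem _ _ (hdir m (by omega)))
  set L : V →ₗ[ℂ] V → ℂ := LinearMap.pi fun v => innerₛₗ ℂ v ∘ₗ (z • LinearMap.id + A)
  obtain rfl : S = L := hS
  refine ⟨hβ0 n le_rfl, htwo n le_rfl, conjugate_of_two_term_recurrence L hβ
    (fun m hm => htwo m hm.le) (fun m hm => hSr m hm.le) (fun k hk => ?_) n le_rfl⟩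
  exact inner_shifted_self_ne_zero hA hpos hz.2.ne (hpne k hk.le)

theorem stmt19 {V : Type*} [NormedAddCommGroup V] [InnerProductSpace ℂ V]
    [FiniteDimensional ℂ V]
    (A : V →ₗ[ℂ] V) (hA : A.IsSymmetric)
    (hpos : ∀ v : V, v ≠ 0 → 0 < ((inner ℂ v (A v) : ℂ)).re)
    (z : ℂ) (hz : z.arg ∈ Set.Ioo (-Real.pi) Real.pi) (hz0 : z ≠ 0)
    (g w0 : V) (w r : ℕ → V)
    (hr : ∀ m, r m = g - (z • w m + A (w m)))
    (Vk : ℕ → Submodule ℂ V)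
    (hVk : ∀ m, Vk m = Submodule.span ℂ {x : V | ∃ k < m, x = (A ^ k) (r 0)})
    (hwm : ∀ m, w m - w0 ∈ Vk m)
    (hgal : ∀ m, ∀ φ ∈ Vk m, (inner ℂ φ (z • w m + A (w m)) : ℂ) = (inner ℂ φ g : ℂ))
    (S : V → V → ℂ) (hS : S = fun u v : V => (inner ℂ v (z • u + A u) : ℂ))
    (n : ℕ) (hn : 1 ≤ n)
    (hrne : ∀ m ≤ n + 1, r m ≠ 0)
    (p : ℕ → V) (hp0 : p 0 = r 0)
    (β : ℕ → ℕ → ℂ)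
    (hβ : ∀ m k, β m k = -(S (r (m + 1)) (p k)) / (S (p k) (p k)))
    (hprec : ∀ m < n + 1,
      p (m + 1) = r (m + 1) + ∑ k ∈ Finset.range (m + 1), β m k • p k) :
    (∀ k < n, β n k = 0) ∧
    (p (n + 1) = r (n + 1) + β n n • p n) ∧
    (∀ k < n, S (p n) (p k) = 0) :=
  stmt19_general A hA hpos z hz g w0 w r hr Vk hVk hwm hgal S hS n hrne p hp0 β hβ hprec
end
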